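/- Let (X,d) be a compact metric space, f_{0,∞} = {f_n}_{n=0}^∞ a sequence of continuous self-maps of X, and n ≥ 2. If the induced system (𝓜(X), f̂_{0,∞}) is weakly mixing of order n, then (X, f_{0,∞}) is weakly mixing of order n. -/

import Mathlib

open MeasureTheory Filter

/-- `nacomp f n = f_{n-1} ∘ ⋯ ∘ f_0` (with `nacomp f 0 = id`): the time-`n` map of the
non-autonomous system `(X, f_{0,∞})`. -/
def nacomp {Y : Type*} (f : ℕ → Y → Y) : ℕ → Y → Y
  | 0 => id
  | n + 1 => f n ∘ nacomp f n

/-- The induced pushforward map `f̂` on the space `𝓜(X)` of Borel probability measures,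
equipped with the Lévy–Prokhorov metric. -/
noncomputable def inducedMap {X : Type*} [MetricSpace X] [MeasurableSpace X] [BorelSpace X]
    (f : X → X) (hf : Continuous f) :
    LevyProkhorov (ProbabilityMeasure X) → LevyProkhorov (ProbabilityMeasure X) :=
  fun μ => (LevyProkhorov.toMeasureEquiv (α := ProbabilityMeasure X)).symm
    (((LevyProkhorov.toMeasureEquiv (α := ProbabilityMeasure X)) μ).map hf.measurable.aemeasurable)

/-- Weak mixing of order `n` of the non-autonomous system given by the maps `f k`. -/
def NAWeakMixingOrder {Y : Type*} [TopologicalSpace Y] (f : ℕ → Y → Y) (n : ℕ) : Prop :=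
  ∀ U V : Fin n → Set Y, (∀ i, IsOpen (U i)) → (∀ i, IsOpen (V i)) →
    (∀ i, (U i).Nonempty) → (∀ i, (V i).Nonempty) →
    ∃ k, 1 ≤ k ∧ ∀ i, (nacomp f k '' U i ∩ V i).Nonempty

/-!
An open set `U ⊆ X` is lifted to the set of measures giving `U` mass `> 1/2`: it is open by the
portmanteau theorem and contains `δ_x` for `x ∈ U`. If `μ(U) > 1/2` and
`(f_0^k)_* μ (V) > 1/2`, then `μ(U) + μ((f_0^k)⁻¹ V) > 1`, so `U` meets `(f_0^k)⁻¹ V`.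
-/

theorem measurable_nacomp {Y : Type*} [MeasurableSpace Y] {f : ℕ → Y → Y}
    (hf : ∀ n, Measurable (f n)) (k : ℕ) : Measurable (nacomp f k) := by
  induction k with
  | zero => exact measurable_id
  | succ k ih => exact (hf k).comp ih

theorem Function.Semiconj.nacomp {Y Z : Type*} {φ : Y → Z} {f : ℕ → Y → Y} {g : ℕ → Z → Z}
    (h : ∀ n, Function.Semiconj φ (f n) (g n)) (k : ℕ) :
    Function.Semiconj φ (nacomp f k) (nacomp g k) := by
  induction k with
  | zero => exact Function.Semiconj.id_right
  | succ k ih => exact (h k).comp_right ih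

theorem nacomp_map {Y : Type*} [MeasurableSpace Y] {f : ℕ → Y → Y}
    (hf : ∀ n, Measurable (f n)) (k : ℕ) (μ : Measure Y) :
    nacomp (fun n => Measure.map (f n)) k μ = μ.map (nacomp f k) := by
  induction k with
  | zero => exact Measure.map_id.symm
  | succ k ih =>
    simp only [nacomp, Function.comp_apply, ih, Measure.map_map (hf k) (measurable_nacomp hf k)]

theorem NAWeakMixingOrder.of_lift {Y Z : Type*} [TopologicalSpace Y] [TopologicalSpace Z]
    {f : ℕ → Y → Y} {g : ℕ → Z → Z} {n : ℕ} (hg : NAWeakMixingOrder g n) (L : Set Y → Set Z)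
    (hL_open : ∀ U, IsOpen U → IsOpen (L U))
    (hL_nonempty : ∀ U, U.Nonempty → (L U).Nonempty)
    (hL : ∀ k U V, IsOpen V → (nacomp g k '' L U ∩ L V).Nonempty →
      (nacomp f k '' U ∩ V).Nonempty) :
    NAWeakMixingOrder f n := by
  intro U V hUo hVo hUne hVne
  obtain ⟨k, hk, hmix⟩ := hg (L ∘ U) (L ∘ V)
    (fun i => hL_open _ (hUo i)) (fun i => hL_open _ (hVo i))
    (fun i => hL_nonempty _ (hUne i)) (fun i => hL_nonempty _ (hVne i))
  exact ⟨k, hk, fun i => hL k _ _ (hVo i) (hmix i)⟩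

theorem MeasureTheory.ProbabilityMeasure.lowerSemicontinuous_measure {Ω : Type*}
    [MeasurableSpace Ω] [TopologicalSpace Ω] [OpensMeasurableSpace Ω] [HasOuterApproxClosed Ω]
    {G : Set Ω} (hG : IsOpen G) :
    LowerSemicontinuous fun μ : ProbabilityMeasure Ω => (μ : Measure Ω) G :=
  lowerSemicontinuous_iff_le_liminf.2 fun _ => le_liminf_measure_open_of_tendsto tendsto_id hG

theorem MeasureTheory.nonempty_image_inter_of_half_lt {Y : Type*} [MeasurableSpace Y]
    (μ : Measure Y) [IsProbabilityMeasure μ] {g : Y → Y} (hg : Measurable g) {U V : Set Y}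
    (hV : MeasurableSet V) (hU : 1 / 2 < μ U) (hgV : 1 / 2 < μ (g ⁻¹' V)) :
    (g '' U ∩ V).Nonempty := by
  refine Set.image_inter_nonempty_iff.2 <|
    nonempty_inter_of_measure_lt_add μ (hg hV) (Set.subset_univ _) (Set.subset_univ _) ?_
  calc μ Set.univ = 1 / 2 + 1 / 2 := by rw [measure_univ, ENNReal.add_halves]
    _ < μ U + μ (g ⁻¹' V) := ENNReal.add_lt_add hU hgV

section

variable {X : Type*} [MeasurableSpace X]

def halfMassSet (U : Set X) : Set (LevyProkhorov (ProbabilityMeasure X)) :=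
  {μ | 1 / 2 < μ.toMeasure.toMeasure U}

theorem isOpen_halfMassSet [PseudoMetricSpace X] [OpensMeasurableSpace X] {U : Set X}
    (hU : IsOpen U) : IsOpen (halfMassSet U) :=
  ((ProbabilityMeasure.lowerSemicontinuous_measure hU).isOpen_preimage _).preimage
    LevyProkhorov.continuous_toMeasure_probabilityMeasure

theorem dirac_mem_halfMassSet {U : Set X} {x : X} (hx : x ∈ U) :
    LevyProkhorov.ofMeasure ⟨Measure.dirac x, inferInstance⟩ ∈ halfMassSet U := by
  show 1 / 2 < Measure.dirac x U
  rw [Measure.dirac_apply_of_mem hx]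
  exact ENNReal.half_lt_self one_ne_zero ENNReal.one_ne_top

variable [MetricSpace X] [BorelSpace X]

theorem toMeasure_inducedMap {g : X → X} (hg : Continuous g)
    (μ : LevyProkhorov (ProbabilityMeasure X)) :
    (inducedMap g hg μ).toMeasure.toMeasure = μ.toMeasure.toMeasure.map g :=
  ProbabilityMeasure.toMeasure_map _ hg.measurable.aemeasurable

theorem toMeasure_nacomp_inducedMap {f : ℕ → X → X} (hf : ∀ n, Continuous (f n)) (k : ℕ)
    (μ : LevyProkhorov (ProbabilityMeasure X)) :
    (nacomp (fun n => inducedMap (f n) (hf n)) k μ).toMeasure.toMeasure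
      = μ.toMeasure.toMeasure.map (nacomp f k) := by
  rw [← nacomp_map (fun n => (hf n).measurable)]
  exact Function.Semiconj.nacomp (g := fun n => Measure.map (f n))
    (φ := fun μ : LevyProkhorov (ProbabilityMeasure X) => μ.toMeasure.toMeasure)
    (fun n => toMeasure_inducedMap (hf n)) k μ

end

theorem weakMixingOrder_of_induced_weakMixingOrder_general
    {X : Type*} [MetricSpace X] [MeasurableSpace X] [BorelSpace X]
    (f : ℕ → X → X) (hf : ∀ n, Continuous (f n)) (n : ℕ)
    (h : NAWeakMixingOrder (fun k => inducedMap (f k) (hf k)) n) :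
    NAWeakMixingOrder f n := by
  refine h.of_lift halfMassSet (fun _ => isOpen_halfMassSet)
    (fun _ ⟨x, hx⟩ => ⟨_, dirac_mem_halfMassSet hx⟩) ?_
  rintro k U V hV ⟨_, ⟨μ, hμU, rfl⟩, hμV⟩
  have hk := measurable_nacomp (fun n => (hf n).measurable) k
  refine nonempty_image_inter_of_half_lt μ.toMeasure.toMeasure hk hV.measurableSet hμU ?_
  rwa [← Measure.map_apply hk hV.measurableSet, ← toMeasure_nacomp_inducedMap hf]

/-- If the induced system `(𝓜(X), f̂_{0,∞})` is weakly mixing of order `n` (`n ≥ 2`), then so is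
`(X, f_{0,∞})`. -/
theorem weakMixingOrder_of_induced_weakMixingOrder
    {X : Type*} [MetricSpace X] [CompactSpace X] [MeasurableSpace X] [BorelSpace X]
    (f : ℕ → X → X) (hf : ∀ n, Continuous (f n)) (n : ℕ) (hn : 2 ≤ n)
    (h : NAWeakMixingOrder (fun k => inducedMap (f k) (hf k)) n) :
    NAWeakMixingOrder f n :=
  weakMixingOrder_of_induced_weakMixingOrder_general f hf n h
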